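/- Let A be a bialgebra and M, N Hopf bimodules over A (two-sided two-cosided Hopf modules). With the right A-module structures on A^n⊗M and N⊗A^p given by (a^1⊗...⊗a^n⊗m)·b = a^1⊗...⊗a^n⊗m·b and (x⊗a^1⊗...⊗a^p)·b = Σ x·b_1⊗a^1b_2⊗...⊗a^pb_{p+1}, and the left A-comodule structures a^1⊗...⊗a^n⊗m ↦ Σ (a^1)_1...(a^n)_1 m_{(-1)} ⊗ (a^1)_2⊗...⊗(a^n)_2⊗m_{(0)} and x⊗a^1⊗...⊗a^p ↦ Σ x_{(-1)}⊗x_{(0)}⊗a^1⊗...⊗a^p, the subspaces T^{n,p}(M,N) = Hom_{mod-A}^{A-comod}(A^n⊗M, N⊗A^p) of maps that are simultaneously right A-linear and left A-colinear are stable under the Hopf-module differentials d_m, d_c, so (T^{n,p}(M,N), d_m, d_c) is a double complex defining a cohomology theory for Hopf bimodules. -/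

import Mathlib

open TensorProduct
noncomputable section

namespace PS

variable (k : Type) [Field k] (A : Type) [Ring A] [Bialgebra k A]

/-- Left-nested tensor powers with base `B`: `pwr B n = B ⊗ A ⊗ ⋯ ⊗ A` (`n` copies of `A`). -/
def pwr (B : ModuleCat k) : ℕ → ModuleCat k
  | 0 => B
  | n + 1 => ModuleCat.of k (pwr B n ⊗[k] A)

/-- `A^{⊗ n}` realized as `pwr k n`, i.e. `k ⊗ A ⊗ ⋯ ⊗ A`. -/
abbrev Pk (n : ℕ) : ModuleCat k := pwr k A (ModuleCat.of k k) n

abbrev μA : A ⊗[k] A →ₗ[k] A := LinearMap.mul' k A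
abbrev ΔA : A →ₗ[k] A ⊗[k] A := Coalgebra.comul
abbrev εA : A →ₗ[k] k := Coalgebra.counit

/-- Multiplication of the tensorands in slots `i` and `i+1` (`1 ≤ i ≤ n`);
junk (zero map) for other `i`. -/
def mulP : (n : ℕ) → (i : ℕ) → ((Pk k A (n+1) : Type) →ₗ[k] Pk k A n)
  | 0, _ => 0
  | n + 1, i =>
      if i = n + 1 then
        (TensorProduct.map (LinearMap.id : (Pk k A n : Type) →ₗ[k] Pk k A n) (μA k A)).comp
          (TensorProduct.assoc k (Pk k A n) A A).toLinearMap
      else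
        TensorProduct.map (mulP n i) (LinearMap.id : A →ₗ[k] A)

/-- Insert an `A`-factor at the innermost slot (slot 1). -/
def insP : (n : ℕ) → (A ⊗[k] (Pk k A n : Type)) ≃ₗ[k] (Pk k A (n+1) : Type)
  | 0 => TensorProduct.comm k A k
  | n + 1 =>
      (TensorProduct.assoc k A (Pk k A n) A).symm.trans
        (TensorProduct.congr (insP n) (LinearEquiv.refl k A))

section NM

variable {N : Type} [AddCommGroup N] [Module k N]

/-- The left diagonal action of `A` on `N ⊗ A^{⊗ p}` built from a base action `ωN`. -/
def ldiag (ωN : A ⊗[k] N →ₗ[k] N) :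
    (p : ℕ) → (A ⊗[k] (pwr k A (ModuleCat.of k N) p : Type) →ₗ[k] pwr k A (ModuleCat.of k N) p)
  | 0 => ωN
  | p + 1 =>
      (TensorProduct.map (ldiag ωN p) (μA k A)).comp <|
        ((TensorProduct.tensorTensorTensorComm k A A
            (pwr k A (ModuleCat.of k N) p : Type) A).toLinearMap).comp
          (TensorProduct.map (ΔA k A) (LinearMap.id :
            ((pwr k A (ModuleCat.of k N) p : Type) ⊗[k] A) →ₗ[k] _))

/-- Right diagonal multiplication on the `A`-slots of `N ⊗ A^{⊗ p}` (counit on the base). -/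
def rdiagE : (p : ℕ) →
    ((pwr k A (ModuleCat.of k N) p : Type) ⊗[k] A →ₗ[k] pwr k A (ModuleCat.of k N) p)
  | 0 => (TensorProduct.rid k N).toLinearMap.comp
      (TensorProduct.map (LinearMap.id : N →ₗ[k] N) (εA k A))
  | p + 1 =>
      (TensorProduct.map (rdiagE p) (μA k A)).comp <|
        ((TensorProduct.tensorTensorTensorComm k
            (pwr k A (ModuleCat.of k N) p : Type) A A A).toLinearMap).comp
          (TensorProduct.map
            (LinearMap.id : ((pwr k A (ModuleCat.of k N) p : Type) ⊗[k] A) →ₗ[k] _) (ΔA k A))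

/-- Right diagonal action on `N ⊗ A^{⊗ p}` built from a base (right) action `ωNr`. -/
def rdiagAct (ωNr : N ⊗[k] A →ₗ[k] N) : (p : ℕ) →
    ((pwr k A (ModuleCat.of k N) p : Type) ⊗[k] A →ₗ[k] pwr k A (ModuleCat.of k N) p)
  | 0 => ωNr
  | p + 1 =>
      (TensorProduct.map (rdiagAct ωNr p) (μA k A)).comp <|
        ((TensorProduct.tensorTensorTensorComm k
            (pwr k A (ModuleCat.of k N) p : Type) A A A).toLinearMap).comp
          (TensorProduct.map
            (LinearMap.id : ((pwr k A (ModuleCat.of k N) p : Type) ⊗[k] A) →ₗ[k] _) (ΔA k A))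

end NM

/-- `dL : A^{⊗ n} → A ⊗ A^{⊗ n}`, `a^1 ⊗ ⋯ ⊗ a^n ↦ Σ (a^1)_1 ⋯ (a^n)_1 ⊗ ((a^1)_2 ⊗ ⋯ ⊗ (a^n)_2)`. -/
def dL : (n : ℕ) → ((Pk k A n : Type) →ₗ[k] A ⊗[k] (Pk k A n : Type))
  | 0 => (TensorProduct.map (Algebra.linearMap k A) (LinearMap.id : k →ₗ[k] k)).comp
      (TensorProduct.lid k k).symm.toLinearMap
  | n + 1 =>
      (TensorProduct.map (μA k A)
          (LinearMap.id : ((Pk k A n : Type) ⊗[k] A) →ₗ[k] _)).comp <|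
        ((TensorProduct.tensorTensorTensorComm k A (Pk k A n : Type) A A).toLinearMap).comp
          (TensorProduct.map (dL n) (ΔA k A))

/-- `dR : A^{⊗ n} → A^{⊗ n} ⊗ A`, `a^1 ⊗ ⋯ ⊗ a^n ↦ Σ ((a^1)_1 ⊗ ⋯ ⊗ (a^n)_1) ⊗ (a^1)_2 ⋯ (a^n)_2`. -/
def dR : (n : ℕ) → ((Pk k A n : Type) →ₗ[k] (Pk k A n : Type) ⊗[k] A)
  | 0 => (TensorProduct.map (LinearMap.id : k →ₗ[k] k) (Algebra.linearMap k A)).comp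
      (TensorProduct.rid k k).symm.toLinearMap
  | n + 1 =>
      (TensorProduct.map
          (LinearMap.id : ((Pk k A n : Type) ⊗[k] A) →ₗ[k] _) (μA k A)).comp <|
        ((TensorProduct.tensorTensorTensorComm k (Pk k A n : Type) A A A).toLinearMap).comp
          (TensorProduct.map (dR n) (ΔA k A))

section Base

variable {N : Type} [AddCommGroup N] [Module k N]

/-- Apply `ρN : N → N ⊗ A` to the base of `N ⊗ A^{⊗ p}`. -/
def rhoBase (ρN : N →ₗ[k] N ⊗[k] A) : (p : ℕ) →
    ((pwr k A (ModuleCat.of k N) p : Type) →ₗ[k] pwr k A (ModuleCat.of k (N ⊗[k] A)) p)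
  | 0 => ρN
  | p + 1 => TensorProduct.map (rhoBase ρN p) (LinearMap.id : A →ₗ[k] A)

/-- Reinterpret `(N ⊗ A) ⊗ A^{⊗ p}` as `N ⊗ A^{⊗ (p+1)}`. -/
def shiftB : (p : ℕ) →
    ((pwr k A (ModuleCat.of k (N ⊗[k] A)) p : Type) ≃ₗ[k] pwr k A (ModuleCat.of k N) (p+1))
  | 0 => LinearEquiv.refl k (N ⊗[k] A)
  | p + 1 => TensorProduct.congr (shiftB p) (LinearEquiv.refl k A)

/-- Multiply the `A`-component of the base `N ⊗ A` on the right by an element of `A`. -/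
def rmulBase : (p : ℕ) →
    ((pwr k A (ModuleCat.of k (N ⊗[k] A)) p : Type) ⊗[k] A →ₗ[k]
      pwr k A (ModuleCat.of k (N ⊗[k] A)) p)
  | 0 => (TensorProduct.map (LinearMap.id : N →ₗ[k] N) (μA k A)).comp
      (TensorProduct.assoc k N A A).toLinearMap
  | p + 1 =>
      (TensorProduct.map (rmulBase p) (LinearMap.id : A →ₗ[k] A)).comp <|
        ((TensorProduct.assoc k (pwr k A (ModuleCat.of k (N ⊗[k] A)) p : Type) A A).symm.toLinearMap).comp <|
          (TensorProduct.map
            (LinearMap.id : (pwr k A (ModuleCat.of k (N ⊗[k] A)) p : Type) →ₗ[k] _)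
            (TensorProduct.comm k A A).toLinearMap).comp
            (TensorProduct.assoc k
              (pwr k A (ModuleCat.of k (N ⊗[k] A)) p : Type) A A).toLinearMap

/-- Apply the counit to the `A`-component of the base `N ⊗ A`. -/
def epsBase : (p : ℕ) →
    ((pwr k A (ModuleCat.of k (N ⊗[k] A)) p : Type) →ₗ[k] pwr k A (ModuleCat.of k N) p)
  | 0 => (TensorProduct.rid k N).toLinearMap.comp
      (TensorProduct.map (LinearMap.id : N →ₗ[k] N) (εA k A))
  | p + 1 => TensorProduct.map (epsBase p) (LinearMap.id : A →ₗ[k] A)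

/-- Apply `Δ` on the `i`-th `A`-slot (`1 ≤ i ≤ p`) of `N ⊗ A^{⊗ p}`; junk otherwise. -/
def comulAt : (p : ℕ) → (i : ℕ) →
    ((pwr k A (ModuleCat.of k N) p : Type) →ₗ[k] pwr k A (ModuleCat.of k N) (p+1))
  | 0, _ => 0
  | p + 1, i =>
      if i = p + 1 then
        ((TensorProduct.assoc k (pwr k A (ModuleCat.of k N) p : Type) A A).symm.toLinearMap).comp
          (TensorProduct.map
            (LinearMap.id : (pwr k A (ModuleCat.of k N) p : Type) →ₗ[k] _) (ΔA k A))
      else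
        TensorProduct.map (comulAt p i) (LinearMap.id : A →ₗ[k] A)

/-- Left coaction on `N ⊗ A^{⊗ p}` coming from a left coaction on the base. -/
def lcoBase (ρNl : N →ₗ[k] A ⊗[k] N) : (p : ℕ) →
    ((pwr k A (ModuleCat.of k N) p : Type) →ₗ[k]
      A ⊗[k] (pwr k A (ModuleCat.of k N) p : Type))
  | 0 => ρNl
  | p + 1 =>
      ((TensorProduct.assoc k A (pwr k A (ModuleCat.of k N) p : Type) A).toLinearMap).comp
        (TensorProduct.map (lcoBase ρNl p) (LinearMap.id : A →ₗ[k] A))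

end Base

section Bicomplex

variable {M N : Type} [AddCommGroup M] [Module k M] [AddCommGroup N] [Module k N]

/-- `A^{⊗ n} ⊗ M`, the domain of the `(n,p)` cochains. -/
abbrev Dm (M : Type) [AddCommGroup M] [Module k M] (n : ℕ) : Type :=
  (Pk k A n : Type) ⊗[k] M

/-- `N ⊗ A^{⊗ p}`. -/
abbrev Cd (N : Type) [AddCommGroup N] [Module k N] (p : ℕ) : Type :=
  (pwr k A (ModuleCat.of k N) p : Type)

/-- The space of `(n,p)` cochains `Hom(A^{⊗ n} ⊗ M, N ⊗ A^{⊗ p})`. -/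
abbrev Yc (M N : Type) [AddCommGroup M] [Module k M] [AddCommGroup N] [Module k N]
    (n p : ℕ) : Type := Dm k A M n →ₗ[k] Cd k A N p

variable (ωM : A ⊗[k] M →ₗ[k] M) (ρM : M →ₗ[k] M ⊗[k] A)
variable (ωN : A ⊗[k] N →ₗ[k] N) (ρN : N →ₗ[k] N ⊗[k] A)

/-- `b_0`: the face using the diagonal left action of `a^1` on `N ⊗ A^{⊗ p}`. -/
def face0 (n p : ℕ) (f : Yc k A M N n p) : Yc k A M N (n+1) p :=
  (ldiag k A ωN p).comp <|
    (TensorProduct.map (LinearMap.id : A →ₗ[k] A) f).comp <|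
      ((TensorProduct.assoc k A (Pk k A n : Type) M).toLinearMap).comp
        (TensorProduct.map (insP k A n).symm.toLinearMap (LinearMap.id : M →ₗ[k] M))

/-- `b_i`, `1 ≤ i ≤ n`: multiply the adjacent arguments `a^i a^{i+1}`. -/
def faceMid (n p : ℕ) (i : ℕ) (f : Yc k A M N n p) : Yc k A M N (n+1) p :=
  f.comp (TensorProduct.map (mulP k A n i) (LinearMap.id : M →ₗ[k] M))

/-- `b_{n+1}` in the Hopf-module case: `f(a^1 ⊗ ⋯ ⊗ a^n ⊗ a^{n+1}·m)`. -/
def faceLastH (n p : ℕ) (f : Yc k A M N n p) : Yc k A M N (n+1) p :=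
  f.comp <|
    (TensorProduct.map (LinearMap.id : (Pk k A n : Type) →ₗ[k] _) ωM).comp
      (TensorProduct.assoc k (Pk k A n : Type) A M).toLinearMap

/-- `b_{n+1}` in the Yetter-Drinfel'd case. -/
def faceLastYD (n p : ℕ) (f : Yc k A M N n p) : Yc k A M N (n+1) p :=
  (rdiagE k A p).comp <|
    ((TensorProduct.comm k A (Cd k A N p)).toLinearMap).comp <|
      (TensorProduct.map (LinearMap.id : A →ₗ[k] A)
        (f.comp (TensorProduct.map (LinearMap.id : (Pk k A n : Type) →ₗ[k] _) ωM))).comp <|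
        ((TensorProduct.leftComm k (Pk k A n : Type) A (A ⊗[k] M)).toLinearMap).comp <|
          (TensorProduct.map (LinearMap.id : (Pk k A n : Type) →ₗ[k] _)
            (TensorProduct.assoc k A A M).toLinearMap).comp <|
            ((TensorProduct.assoc k (Pk k A n : Type) (A ⊗[k] A) M).toLinearMap).comp
              (TensorProduct.map
                (TensorProduct.map (LinearMap.id : (Pk k A n : Type) →ₗ[k] _) (ΔA k A))
                (LinearMap.id : M →ₗ[k] M))

/-- The Yetter-Drinfel'd horizontal faces `b_i^{n,p}`, `0 ≤ i ≤ n+1`. -/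
def bYD (n p : ℕ) (i : ℕ) (f : Yc k A M N n p) : Yc k A M N (n+1) p :=
  if i = 0 then face0 k A ωN n p f
  else if i ≤ n then faceMid k A n p i f
  else faceLastYD k A ωM n p f

/-- The Hopf-module horizontal faces `b_i^{n,p}`, `0 ≤ i ≤ n+1`. -/
def bH (n p : ℕ) (i : ℕ) (f : Yc k A M N n p) : Yc k A M N (n+1) p :=
  if i = 0 then face0 k A ωN n p f
  else if i ≤ n then faceMid k A n p i f
  else faceLastH k A ωM n p f

/-- `c_0` in the Hopf-module case: apply `ρ_N` to the `N`-component of the output. -/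
def cof0H (n p : ℕ) (f : Yc k A M N n p) : Yc k A M N n (p+1) :=
  ((shiftB k A p).toLinearMap).comp ((rhoBase k A ρN p).comp f)

/-- `c_0` in the Yetter-Drinfel'd case. -/
def cof0YD (n p : ℕ) (f : Yc k A M N n p) : Yc k A M N n (p+1) :=
  ((shiftB k A p).toLinearMap).comp <|
    (rmulBase k A p).comp <|
      ((TensorProduct.comm k A
          (pwr k A (ModuleCat.of k (N ⊗[k] A)) p : Type)).toLinearMap).comp <|
        (TensorProduct.map (LinearMap.id : A →ₗ[k] A) ((rhoBase k A ρN p).comp f)).comp <|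
          ((TensorProduct.assoc k A (Pk k A n : Type) M).toLinearMap).comp
            (TensorProduct.map (dL k A n) (LinearMap.id : M →ₗ[k] M))

/-- `c_{p+1}`: uses the right comodule structure of `M`. -/
def cofLast (n p : ℕ) (f : Yc k A M N n p) : Yc k A M N n (p+1) :=
  (TensorProduct.map f (μA k A)).comp <|
    ((TensorProduct.tensorTensorTensorComm k (Pk k A n : Type) A M A).toLinearMap).comp
      (TensorProduct.map (dR k A n) ρM)

/-- The Yetter-Drinfel'd vertical cofaces `c_j^{n,p}`, `0 ≤ j ≤ p+1`. -/
def cYD (n p : ℕ) (j : ℕ) (f : Yc k A M N n p) : Yc k A M N n (p+1) :=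
  if j = 0 then cof0YD k A ρN n p f
  else if j ≤ p then (comulAt k A p j).comp f
  else cofLast k A ρM n p f

/-- The Hopf-module vertical cofaces `c_j^{n,p}`, `0 ≤ j ≤ p+1`. -/
def cH (n p : ℕ) (j : ℕ) (f : Yc k A M N n p) : Yc k A M N n (p+1) :=
  if j = 0 then cof0H k A ρN n p f
  else if j ≤ p then (comulAt k A p j).comp f
  else cofLast k A ρM n p f

/-- The horizontal differential (Yetter-Drinfel'd case). -/
def dmYD (n p : ℕ) (f : Yc k A M N n p) : Yc k A M N (n+1) p :=
  ∑ i ∈ Finset.range (n+2), ((-1 : ℤ)^i) • bYD k A ωM ωN n p i f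

/-- The vertical differential (Yetter-Drinfel'd case). -/
def dcYD (n p : ℕ) (f : Yc k A M N n p) : Yc k A M N n (p+1) :=
  ∑ j ∈ Finset.range (p+2), ((-1 : ℤ)^j) • cYD k A ρM ρN n p j f

/-- The horizontal differential (Hopf-module case). -/
def dmH (n p : ℕ) (f : Yc k A M N n p) : Yc k A M N (n+1) p :=
  ∑ i ∈ Finset.range (n+2), ((-1 : ℤ)^i) • bH k A ωM ωN n p i f

/-- The vertical differential (Hopf-module case). -/
def dcH (n p : ℕ) (f : Yc k A M N n p) : Yc k A M N n (p+1) :=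
  ∑ j ∈ Finset.range (p+2), ((-1 : ℤ)^j) • cH k A ρM ρN n p j f

end Bicomplex

section Structures

variable {M : Type} [AddCommGroup M] [Module k M]

/-- `(M, ωM)` is a left `A`-module. -/
def IsModule (ωM : A ⊗[k] M →ₗ[k] M) : Prop :=
  (∀ m : M, ωM ((1 : A) ⊗ₜ m) = m) ∧
  ∀ (a b : A) (m : M), ωM (a ⊗ₜ ωM (b ⊗ₜ m)) = ωM ((a * b) ⊗ₜ m)

/-- `(M, ρM)` is a right `A`-comodule. -/
def IsComodule (ρM : M →ₗ[k] M ⊗[k] A) : Prop :=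
  ((TensorProduct.rid k M).toLinearMap.comp
      ((TensorProduct.map (LinearMap.id : M →ₗ[k] M) (εA k A)).comp ρM) = LinearMap.id) ∧
  (TensorProduct.map ρM (LinearMap.id : A →ₗ[k] A)).comp ρM =
    ((TensorProduct.assoc k M A A).symm.toLinearMap).comp
      ((TensorProduct.map (LinearMap.id : M →ₗ[k] M) (ΔA k A)).comp ρM)

/-- The map `a ⊗ m ↦ Σ a_1·m_0 ⊗ a_2 m_1`. -/
def hopfRHS (ωM : A ⊗[k] M →ₗ[k] M) (ρM : M →ₗ[k] M ⊗[k] A) :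
    A ⊗[k] M →ₗ[k] M ⊗[k] A :=
  (TensorProduct.map ωM (μA k A)).comp <|
    ((TensorProduct.tensorTensorTensorComm k A A M A).toLinearMap).comp
      (TensorProduct.map (ΔA k A) ρM)

/-- The map `a ⊗ m ↦ Σ (a_2·m)_0 ⊗ (a_2·m)_1 a_1`. -/
def ydLHS (ωM : A ⊗[k] M →ₗ[k] M) (ρM : M →ₗ[k] M ⊗[k] A) :
    A ⊗[k] M →ₗ[k] M ⊗[k] A :=
  (TensorProduct.map (LinearMap.id : M →ₗ[k] M) (μA k A)).comp <|
    ((TensorProduct.assoc k M A A).toLinearMap).comp <|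
      ((TensorProduct.comm k A (M ⊗[k] A)).toLinearMap).comp <|
        (TensorProduct.map (LinearMap.id : A →ₗ[k] A) (ρM.comp ωM)).comp <|
          ((TensorProduct.assoc k A A M).toLinearMap).comp
            (TensorProduct.map (ΔA k A) (LinearMap.id : M →ₗ[k] M))

/-- `(M, ωM, ρM)` is a left-right Yetter-Drinfel'd module over `A`. -/
def IsYetterDrinfeld (ωM : A ⊗[k] M →ₗ[k] M) (ρM : M →ₗ[k] M ⊗[k] A) : Prop :=
  IsModule k A ωM ∧ IsComodule k A ρM ∧
    ydLHS k A ωM ρM = hopfRHS k A ωM ρM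

/-- `(M, ωM, ρM)` is a left-right Hopf module over `A`. -/
def IsHopfModule (ωM : A ⊗[k] M →ₗ[k] M) (ρM : M →ₗ[k] M ⊗[k] A) : Prop :=
  IsModule k A ωM ∧ IsComodule k A ρM ∧
    ρM.comp ωM = hopfRHS k A ωM ρM

end Structures


section Bimod

variable (k : Type) [Field k] (A : Type) [Ring A] [Bialgebra k A]
variable {M N : Type} [AddCommGroup M] [Module k M] [AddCommGroup N] [Module k N]

/-- The right `A`-action on `A^{⊗n} ⊗ M`: `(a^1 ⊗ ⋯ ⊗ a^n ⊗ m)·b = a^1 ⊗ ⋯ ⊗ a^n ⊗ m·b`. -/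
def rActDm (ωMr : M ⊗[k] A →ₗ[k] M) (n : ℕ) :
    (Dm k A M n) ⊗[k] A →ₗ[k] Dm k A M n :=
  (TensorProduct.map (LinearMap.id : (Pk k A n : Type) →ₗ[k] _) ωMr).comp
    (TensorProduct.assoc k (Pk k A n : Type) M A).toLinearMap

/-- `f : A^{⊗n} ⊗ M → N ⊗ A^{⊗p}` is right `A`-linear for the structures of the paper
(the diagonal right action `(x ⊗ a^1 ⊗ ⋯ ⊗ a^p)·b = Σ x·b_1 ⊗ a^1 b_2 ⊗ ⋯ ⊗ a^p b_{p+1}`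
on the codomain). -/
def IsRightLinear (ωMr : M ⊗[k] A →ₗ[k] M) (ωNr : N ⊗[k] A →ₗ[k] N) (n p : ℕ)
    (f : Yc k A M N n p) : Prop :=
  f.comp (rActDm k A ωMr n) =
    (rdiagAct k A ωNr p).comp (TensorProduct.map f (LinearMap.id : A →ₗ[k] A))

/-- `(M, ωMr)` is a right `A`-module. -/
def IsModuleR (ωMr : M ⊗[k] A →ₗ[k] M) : Prop :=
  (∀ m : M, ωMr (m ⊗ₜ (1 : A)) = m) ∧
  ∀ (m : M) (a b : A), ωMr (ωMr (m ⊗ₜ a) ⊗ₜ b) = ωMr (m ⊗ₜ (a * b))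

/-- Bimodule compatibility: `(a·m)·b = a·(m·b)`. -/
def IsBimodule (ωM : A ⊗[k] M →ₗ[k] M) (ωMr : M ⊗[k] A →ₗ[k] M) : Prop :=
  ∀ (a b : A) (m : M), ωMr (ωM (a ⊗ₜ m) ⊗ₜ b) = ωM (a ⊗ₜ ωMr (m ⊗ₜ b))

/-- Right-right Hopf-module compatibility: `ρ(m·a) = Σ m_0·a_1 ⊗ m_1 a_2`. -/
def IsHopfRR (ωMr : M ⊗[k] A →ₗ[k] M) (ρM : M →ₗ[k] M ⊗[k] A) : Prop :=
  ρM.comp ωMr =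
    (TensorProduct.map ωMr (μA k A)).comp
      (((TensorProduct.tensorTensorTensorComm k M A A A).toLinearMap).comp
        (TensorProduct.map ρM (ΔA k A)))

/-- `M` is an object of `A_{lr}^r`: a bimodule which is a left-right and a
right-right Hopf module. -/
def IsLRRObject (ωM : A ⊗[k] M →ₗ[k] M) (ωMr : M ⊗[k] A →ₗ[k] M)
    (ρM : M →ₗ[k] M ⊗[k] A) : Prop :=
  IsModule k A ωM ∧ IsModuleR k A ωMr ∧ IsBimodule k A ωM ωMr ∧
    IsComodule k A ρM ∧ ρM.comp ωM = hopfRHS k A ωM ρM ∧ IsHopfRR k A ωMr ρM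

/-- The left `A`-coaction on `A^{⊗n} ⊗ M`:
`a^1 ⊗ ⋯ ⊗ a^n ⊗ m ↦ Σ (a^1)_1 ⋯ (a^n)_1 m_{(-1)} ⊗ (a^1)_2 ⊗ ⋯ ⊗ (a^n)_2 ⊗ m_{(0)}`. -/
def lcoDm (ρMl : M →ₗ[k] A ⊗[k] M) (n : ℕ) :
    Dm k A M n →ₗ[k] A ⊗[k] Dm k A M n :=
  (TensorProduct.map (μA k A)
      (LinearMap.id : ((Pk k A n : Type) ⊗[k] M) →ₗ[k] _)).comp <|
    ((TensorProduct.tensorTensorTensorComm k A (Pk k A n : Type) A M).toLinearMap).comp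
      (TensorProduct.map (dL k A n) ρMl)

/-- `f : A^{⊗n} ⊗ M → N ⊗ A^{⊗p}` is left `A`-colinear for the structures of the paper
(the coaction `x ⊗ a^1 ⊗ ⋯ ⊗ a^p ↦ Σ x_{(-1)} ⊗ x_{(0)} ⊗ a^1 ⊗ ⋯ ⊗ a^p` on the
codomain). -/
def IsLeftColinear (ρMl : M →ₗ[k] A ⊗[k] M) (ρNl : N →ₗ[k] A ⊗[k] N) (n p : ℕ)
    (f : Yc k A M N n p) : Prop :=
  (lcoBase k A ρNl p).comp f =
    (TensorProduct.map (LinearMap.id : A →ₗ[k] A) f).comp (lcoDm k A ρMl n)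

/-- `(M, ρMl)` is a left `A`-comodule. -/
def IsComoduleL (ρMl : M →ₗ[k] A ⊗[k] M) : Prop :=
  ((TensorProduct.lid k M).toLinearMap.comp
      ((TensorProduct.map (εA k A) (LinearMap.id : M →ₗ[k] M)).comp ρMl) =
    LinearMap.id) ∧
  (TensorProduct.map (ΔA k A) (LinearMap.id : M →ₗ[k] M)).comp ρMl =
    ((TensorProduct.assoc k A A M).symm.toLinearMap).comp
      ((TensorProduct.map (LinearMap.id : A →ₗ[k] A) ρMl).comp ρMl)

/-- `M` is an `A`-bicomodule:
`Σ m_{(-1)} ⊗ (m_{(0)})_0 ⊗ (m_{(0)})_1 = Σ (m_0)_{(-1)} ⊗ (m_0)_{(0)} ⊗ m_1`. -/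
def IsBicomodule (ρMl : M →ₗ[k] A ⊗[k] M) (ρM : M →ₗ[k] M ⊗[k] A) : Prop :=
  (TensorProduct.map (LinearMap.id : A →ₗ[k] A) ρM).comp ρMl =
    ((TensorProduct.assoc k A M A).toLinearMap).comp
      ((TensorProduct.map ρMl (LinearMap.id : A →ₗ[k] A)).comp ρM)

/-- Left-left Hopf-module compatibility: `ρ^l(a·m) = Σ a_1 m_{(-1)} ⊗ a_2·m_{(0)}`. -/
def IsHopfLL (ωM : A ⊗[k] M →ₗ[k] M) (ρMl : M →ₗ[k] A ⊗[k] M) : Prop :=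
  ρMl.comp ωM =
    (TensorProduct.map (μA k A) ωM).comp
      (((TensorProduct.tensorTensorTensorComm k A A A M).toLinearMap).comp
        (TensorProduct.map (ΔA k A) ρMl))

/-- Right-left Hopf-module compatibility: `ρ^l(m·a) = Σ m_{(-1)} a_1 ⊗ m_{(0)}·a_2`. -/
def IsHopfRL (ωMr : M ⊗[k] A →ₗ[k] M) (ρMl : M →ₗ[k] A ⊗[k] M) : Prop :=
  ρMl.comp ωMr =
    (TensorProduct.map (μA k A) ωMr).comp
      (((TensorProduct.tensorTensorTensorComm k A M A A).toLinearMap).comp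
        (TensorProduct.map ρMl (ΔA k A)))

/-- `M` is an object of `A_l^{lr}`: a bicomodule which is a left-left and a
left-right Hopf module. -/
def IsLLRObject (ωM : A ⊗[k] M →ₗ[k] M) (ρMl : M →ₗ[k] A ⊗[k] M)
    (ρM : M →ₗ[k] M ⊗[k] A) : Prop :=
  IsModule k A ωM ∧ IsComoduleL k A ρMl ∧ IsComodule k A ρM ∧
    IsBicomodule k A ρMl ρM ∧ IsHopfLL k A ωM ρMl ∧
    ρM.comp ωM = hopfRHS k A ωM ρM

/-- `M` is a Hopf bimodule (two-sided two-cosided Hopf module) over `A`. -/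
def IsHopfBimodule (ωM : A ⊗[k] M →ₗ[k] M) (ωMr : M ⊗[k] A →ₗ[k] M)
    (ρMl : M →ₗ[k] A ⊗[k] M) (ρM : M →ₗ[k] M ⊗[k] A) : Prop :=
  IsModule k A ωM ∧ IsModuleR k A ωMr ∧ IsBimodule k A ωM ωMr ∧
    IsComoduleL k A ρMl ∧ IsComodule k A ρM ∧ IsBicomodule k A ρMl ρM ∧
    IsHopfLL k A ωM ρMl ∧ ρM.comp ωM = hopfRHS k A ωM ρM ∧
    IsHopfRL k A ωMr ρMl ∧ IsHopfRR k A ωMr ρM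

end Bimod

end PS

/-!
`T^{n,p}(M,N)` is the space of morphisms from `A^{⊗n} ⊗ M` to `N ⊗ A^{⊗p}` in the category of
right `A`-modules and left `A`-comodules, both objects carrying the diagonal structures. Every
face `b_i` and coface `c_j` of `f` is `f` composed, or tensored, with maps that are themselves
module and comodule morphisms: the multiplication and comultiplication of `A` (because `Δ` is
multiplicative and coassociative), the actions of `M, N` (bimodule and left-left Hopf axioms), their
right coactions (right-right Hopf and bicomodule axioms), and rebracketings. Module and comodule
morphisms are closed under composition, tensor products and linear combinations, hence under
`d_m` and `d_c`.
-/

namespace PS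

section Framework

variable {k A : Type*} [CommSemiring k] [Semiring A] [Bialgebra k A]
variable {X Y Z W X' Y' : Type*} [AddCommMonoid X] [Module k X] [AddCommMonoid Y]
  [Module k Y] [AddCommMonoid Z] [Module k Z] [AddCommMonoid W] [Module k W] [AddCommMonoid X']
  [Module k X'] [AddCommMonoid Y'] [Module k Y']

/- Right actions are maps `X ⊗ A → X`, left coactions maps `X → A ⊗ X`. By definition
`rActDm ω n = actOnRight ω`, `rdiagAct ω (p + 1) = diagAct (rdiagAct ω p) (mul' k A)`,
`ldiag ω (p + 1) = diagLeftAct (ldiag ω p)`, `lcoDm ρ n = diagCoact (dL n) ρ`,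
`lcoBase ρ (p + 1) = coactOnLeft (lcoBase ρ p)`, `dL (n + 1) = diagCoact (dL n) comul` and
`dR (n + 1) = diagRightCoact (dR n) comul`, which is how the lemmas below apply to them. -/

variable (k A) in
def IsRightActionHom (ωX : X ⊗[k] A →ₗ[k] X) (ωY : Y ⊗[k] A →ₗ[k] Y) (g : X →ₗ[k] Y) :
    Prop :=
  g ∘ₗ ωX = ωY ∘ₗ map g LinearMap.id

variable (k A) in
def IsLeftCoactionHom (ρX : X →ₗ[k] A ⊗[k] X) (ρY : Y →ₗ[k] A ⊗[k] Y) (g : X →ₗ[k] Y) :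
    Prop :=
  ρY ∘ₗ g = map LinearMap.id g ∘ₗ ρX

def actOnRight (ω : Y ⊗[k] A →ₗ[k] Y) : (X ⊗[k] Y) ⊗[k] A →ₗ[k] X ⊗[k] Y :=
  (map LinearMap.id ω).comp (TensorProduct.assoc k X Y A).toLinearMap

def diagAct (ωX : X ⊗[k] A →ₗ[k] X) (ωY : Y ⊗[k] A →ₗ[k] Y) :
    (X ⊗[k] Y) ⊗[k] A →ₗ[k] X ⊗[k] Y :=
  (map ωX ωY).comp <|
    (tensorTensorTensorComm k X Y A A).toLinearMap.comp (map LinearMap.id Coalgebra.comul)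

def diagLeftAct (ω : A ⊗[k] X →ₗ[k] X) : A ⊗[k] (X ⊗[k] A) →ₗ[k] X ⊗[k] A :=
  (map ω (LinearMap.mul' k A)).comp <|
    (tensorTensorTensorComm k A A X A).toLinearMap.comp (map Coalgebra.comul LinearMap.id)

def coactOnLeft (ρ : X →ₗ[k] A ⊗[k] X) : X ⊗[k] Y →ₗ[k] A ⊗[k] (X ⊗[k] Y) :=
  (TensorProduct.assoc k A X Y).toLinearMap.comp (map ρ LinearMap.id)

def diagCoact (ρX : X →ₗ[k] A ⊗[k] X) (ρY : Y →ₗ[k] A ⊗[k] Y) :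
    X ⊗[k] Y →ₗ[k] A ⊗[k] (X ⊗[k] Y) :=
  (map (LinearMap.mul' k A) LinearMap.id).comp <|
    (tensorTensorTensorComm k A X A Y).toLinearMap.comp (map ρX ρY)

def diagRightCoact (ρX : X →ₗ[k] X ⊗[k] A) (ρY : Y →ₗ[k] Y ⊗[k] A) :
    X ⊗[k] Y →ₗ[k] (X ⊗[k] Y) ⊗[k] A :=
  (map LinearMap.id (LinearMap.mul' k A)).comp <|
    (tensorTensorTensorComm k X A Y A).toLinearMap.comp (map ρX ρY)

theorem map_comul_comul_eq {T : Type*} [AddCommMonoid T] [Module k T]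
    {Φ : A ⊗[k] (A ⊗[k] A) →ₗ[k] T} {Ψ : (A ⊗[k] A) ⊗[k] A →ₗ[k] T}
    (h : ∀ a b c : A, Ψ ((a ⊗ₜ b) ⊗ₜ c) = Φ (a ⊗ₜ (b ⊗ₜ c))) (a : A) :
    Ψ (map Coalgebra.comul LinearMap.id (Coalgebra.comul a)) =
      Φ (map LinearMap.id Coalgebra.comul (Coalgebra.comul a)) := by
  have hΨ : Ψ = Φ ∘ₗ (TensorProduct.assoc k A A A).toLinearMap :=
    TensorProduct.ext_threefold fun a b c => h a b c
  rw [hΨ, LinearMap.comp_apply, LinearEquiv.coe_coe]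
  exact congrArg Φ (Coalgebra.coassoc_apply (R := k) a)

section RightAction

variable {ωX : X ⊗[k] A →ₗ[k] X} {ωY : Y ⊗[k] A →ₗ[k] Y} {ωZ : Z ⊗[k] A →ₗ[k] Z}
  {ωW : W ⊗[k] A →ₗ[k] W} {ωX' : X' ⊗[k] A →ₗ[k] X'} {ωY' : Y' ⊗[k] A →ₗ[k] Y'}

theorem diagAct_tmul (x : X) (y : Y) (b : A) :
    diagAct ωX ωY ((x ⊗ₜ y) ⊗ₜ b) =
      map (ωX ∘ₗ mk k X A x) (ωY ∘ₗ mk k Y A y) (Coalgebra.comul b) := by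
  simp only [diagAct, LinearMap.comp_apply, map_tmul, LinearMap.id_apply]
  induction Coalgebra.comul (R := k) b using TensorProduct.induction_on with
  | zero => simp
  | add t₁ t₂ h₁ h₂ => simp only [tmul_add, map_add, h₁, h₂]
  | tmul b₁ b₂ => rfl

theorem diagAct_comp_mk (x : X) (y : Y) :
    diagAct ωX ωY ∘ₗ mk k (X ⊗[k] Y) A (x ⊗ₜ y) =
      map (ωX ∘ₗ mk k X A x) (ωY ∘ₗ mk k Y A y) ∘ₗ Coalgebra.comul :=
  LinearMap.ext (diagAct_tmul x y)

theorem IsRightActionHom.comp {g : X →ₗ[k] Y} {h : Y →ₗ[k] Z}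
    (hh : IsRightActionHom k A ωY ωZ h) (hg : IsRightActionHom k A ωX ωY g) :
    IsRightActionHom k A ωX ωZ (h ∘ₗ g) := by
  unfold IsRightActionHom at *
  rw [LinearMap.comp_assoc, hg, ← LinearMap.comp_assoc, hh, LinearMap.comp_assoc,
    ← map_comp, LinearMap.id_comp]

theorem isRightActionHom_zero : IsRightActionHom k A ωX ωY 0 := by
  simp [IsRightActionHom]

theorem isRightActionHom_id : IsRightActionHom k A ωX ωX LinearMap.id := by
  simp [IsRightActionHom, map_id]

variable (k A ωX ωY) in
def rightActionHoms : Submodule k (X →ₗ[k] Y) where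
  carrier := {g | IsRightActionHom k A ωX ωY g}
  zero_mem' := isRightActionHom_zero
  add_mem' {g h} hg hh := by
    simp only [Set.mem_ofPred_eq, IsRightActionHom] at *
    rw [LinearMap.add_comp, hg, hh, map_add_left, LinearMap.comp_add]
  smul_mem' c g hg := by
    simp only [Set.mem_ofPred_eq, IsRightActionHom] at *
    rw [LinearMap.smul_comp, hg, map_smul_left, LinearMap.comp_smul]

theorem IsRightActionHom.map_actOnRight (g : X →ₗ[k] X') {h : Y →ₗ[k] Y'}
    (hh : IsRightActionHom k A ωY ωY' h) :
    IsRightActionHom k A (actOnRight ωY) (actOnRight ωY') (map g h) := by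
  refine TensorProduct.ext_threefold fun x y a => ?_
  simpa [actOnRight] using congr(g x ⊗ₜ[k] $(LinearMap.congr_fun hh (y ⊗ₜ a)))

theorem isRightActionHom_assoc :
    IsRightActionHom k A (actOnRight ωZ) (actOnRight (actOnRight ωZ))
      (TensorProduct.assoc k X Y Z).toLinearMap := by
  ext x y z a
  rfl

theorem IsRightActionHom.map_diagAct {g : X →ₗ[k] X'} {h : Y →ₗ[k] Y'}
    (hg : IsRightActionHom k A ωX ωX' g) (hh : IsRightActionHom k A ωY ωY' h) :
    IsRightActionHom k A (diagAct ωX ωY) (diagAct ωX' ωY') (map g h) := by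
  refine TensorProduct.ext_threefold fun x y b => ?_
  simp only [LinearMap.comp_apply, map_tmul, LinearMap.id_apply, diagAct_tmul, map_map]
  congr 2 <;> ext c
  exacts [LinearMap.congr_fun hg (x ⊗ₜ c), LinearMap.congr_fun hh (y ⊗ₜ c)]

theorem isRightActionHom_tensorTensorTensorComm :
    IsRightActionHom k A (actOnRight (X := X ⊗[k] Y) (diagAct ωZ ωW))
      (diagAct (actOnRight ωZ) (actOnRight ωW))
      (tensorTensorTensorComm k X Y Z W).toLinearMap := by
  refine TensorProduct.ext_threefold fun v u b => ?_
  induction v using TensorProduct.induction_on with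
  | zero => simp
  | add v₁ v₂ h₁ h₂ => simp only [add_tmul, map_add, h₁, h₂]
  | tmul x y =>
    induction u using TensorProduct.induction_on with
    | zero => simp
    | add u₁ u₂ h₁ h₂ => simp only [tmul_add, add_tmul, map_add, h₁, h₂]
    | tmul z w =>
      simp only [diagAct, actOnRight, LinearMap.comp_apply, map_tmul, LinearMap.id_apply,
        LinearEquiv.coe_coe, assoc_tmul]
      induction Coalgebra.comul (R := k) b using TensorProduct.induction_on with
      | zero => simp
      | add t₁ t₂ h₁ h₂ => simp only [tmul_add, map_add, h₁, h₂]
      | tmul b₁ b₂ => simp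

theorem isRightActionHom_assoc_symm_diagAct :
    IsRightActionHom k A (diagAct ωX (diagAct ωY ωZ)) (diagAct (diagAct ωX ωY) ωZ)
      (TensorProduct.assoc k X Y Z).symm.toLinearMap := by
  refine TensorProduct.ext_threefold fun x u b => ?_
  induction u using TensorProduct.induction_on with
  | zero => simp
  | add u₁ u₂ h₁ h₂ => simp only [tmul_add, add_tmul, map_add, h₁, h₂]
  | tmul y z =>
    have hL : diagAct ωX (diagAct ωY ωZ) ((x ⊗ₜ (y ⊗ₜ z)) ⊗ₜ b) =
        map (ωX ∘ₗ mk k X A x) (map (ωY ∘ₗ mk k Y A y) (ωZ ∘ₗ mk k Z A z))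
          (map LinearMap.id Coalgebra.comul (Coalgebra.comul b)) := by
      rw [diagAct_tmul, diagAct_comp_mk, map_map, LinearMap.comp_id]
    have hR : diagAct (diagAct ωX ωY) ωZ (((x ⊗ₜ y) ⊗ₜ z) ⊗ₜ b) =
        map (map (ωX ∘ₗ mk k X A x) (ωY ∘ₗ mk k Y A y)) (ωZ ∘ₗ mk k Z A z)
          (map Coalgebra.comul LinearMap.id (Coalgebra.comul b)) := by
      rw [diagAct_tmul, diagAct_comp_mk, map_map, LinearMap.comp_id]
    simp only [LinearMap.comp_apply, LinearEquiv.coe_coe, map_tmul, LinearMap.id_apply,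
      assoc_symm_tmul, hL, hR]
    exact (map_comul_comul_eq (Φ := (TensorProduct.assoc k X Y Z).symm.toLinearMap ∘ₗ
      map (ωX ∘ₗ mk k X A x) (map (ωY ∘ₗ mk k Y A y) (ωZ ∘ₗ mk k Z A z)))
      (fun _ _ _ => rfl) b).symm

theorem isRightActionHom_mul' :
    IsRightActionHom k A (actOnRight (LinearMap.mul' k A)) (LinearMap.mul' k A)
      (LinearMap.mul' k A) := by
  refine TensorProduct.ext_threefold fun a c b => ?_
  simp [actOnRight, mul_assoc]

theorem isRightActionHom_comul :
    IsRightActionHom k A (LinearMap.mul' k A)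
      (diagAct (LinearMap.mul' k A) (LinearMap.mul' k A)) Coalgebra.comul := by
  refine TensorProduct.ext' fun a b => ?_
  simp only [diagAct, LinearMap.comp_apply, map_tmul, LinearMap.id_apply, LinearMap.mul'_apply,
    Bialgebra.comul_mul (R := k)]
  induction Coalgebra.comul (R := k) a using TensorProduct.induction_on with
  | zero => simp
  | add t₁ t₂ h₁ h₂ => simp only [add_tmul, add_mul, map_add, h₁, h₂]
  | tmul a₁ a₂ =>
    induction Coalgebra.comul (R := k) b using TensorProduct.induction_on with
    | zero => simp
    | add t₁ t₂ h₁ h₂ => simp only [tmul_add, mul_add, map_add, h₁, h₂]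
    | tmul b₁ b₂ => simp

theorem isRightActionHom_diagLeftAct {ωl : A ⊗[k] X →ₗ[k] X}
    (h : IsRightActionHom k A (actOnRight ωX) ωX ωl) :
    IsRightActionHom k A (actOnRight (diagAct ωX (LinearMap.mul' k A)))
      (diagAct ωX (LinearMap.mul' k A)) (diagLeftAct ωl) :=
  (h.map_diagAct isRightActionHom_mul').comp <|
    isRightActionHom_tensorTensorTensorComm.comp <| isRightActionHom_id.map_actOnRight _

theorem isRightActionHom_diagRightCoact {ρX : X →ₗ[k] X ⊗[k] A} {ρY : Y →ₗ[k] Y ⊗[k] A}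
    (h : IsRightActionHom k A ωY (diagAct ωY (LinearMap.mul' k A)) ρY) :
    IsRightActionHom k A (actOnRight ωY) (diagAct (actOnRight ωY) (LinearMap.mul' k A))
      (diagRightCoact ρX ρY) :=
  (isRightActionHom_id.map_diagAct isRightActionHom_mul').comp <|
    isRightActionHom_tensorTensorTensorComm.comp <| h.map_actOnRight ρX

end RightAction

section LeftCoaction

variable {ρX : X →ₗ[k] A ⊗[k] X} {ρY : Y →ₗ[k] A ⊗[k] Y} {ρZ : Z →ₗ[k] A ⊗[k] Z}
  {ρX' : X' →ₗ[k] A ⊗[k] X'} {ρY' : Y' →ₗ[k] A ⊗[k] Y'}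

theorem IsLeftCoactionHom.comp {g : X →ₗ[k] Y} {h : Y →ₗ[k] Z}
    (hh : IsLeftCoactionHom k A ρY ρZ h) (hg : IsLeftCoactionHom k A ρX ρY g) :
    IsLeftCoactionHom k A ρX ρZ (h ∘ₗ g) := by
  unfold IsLeftCoactionHom at *
  rw [← LinearMap.comp_assoc, hh, LinearMap.comp_assoc, hg, ← LinearMap.comp_assoc,
    ← map_comp, LinearMap.id_comp]

theorem isLeftCoactionHom_zero : IsLeftCoactionHom k A ρX ρY 0 := by
  simp [IsLeftCoactionHom]

theorem isLeftCoactionHom_id : IsLeftCoactionHom k A ρX ρX LinearMap.id := by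
  simp [IsLeftCoactionHom, map_id]

variable (k A ρX ρY) in
def leftCoactionHoms : Submodule k (X →ₗ[k] Y) where
  carrier := {g | IsLeftCoactionHom k A ρX ρY g}
  zero_mem' := isLeftCoactionHom_zero
  add_mem' {g h} hg hh := by
    simp only [Set.mem_ofPred_eq, IsLeftCoactionHom] at *
    rw [LinearMap.comp_add, hg, hh, map_add_right, LinearMap.add_comp]
  smul_mem' c g hg := by
    simp only [Set.mem_ofPred_eq, IsLeftCoactionHom] at *
    rw [LinearMap.comp_smul, hg, map_smul_right, LinearMap.smul_comp]

theorem IsLeftCoactionHom.symm {e : X ≃ₗ[k] Y} (he : IsLeftCoactionHom k A ρX ρY e) :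
    IsLeftCoactionHom k A ρY ρX e.symm := by
  ext y
  obtain ⟨x, rfl⟩ := e.surjective y
  have hx := LinearMap.congr_fun he x
  simp only [LinearMap.comp_apply, LinearEquiv.coe_coe] at hx ⊢
  rw [hx, map_map, LinearEquiv.symm_apply_apply]
  simp

theorem IsLeftCoactionHom.map_coactOnLeft {g : X →ₗ[k] X'}
    (hg : IsLeftCoactionHom k A ρX ρX' g) (h : Y →ₗ[k] Y') :
    IsLeftCoactionHom k A (coactOnLeft ρX) (coactOnLeft ρX') (map g h) := by
  refine TensorProduct.ext' fun x y => ?_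
  simp only [coactOnLeft, LinearMap.comp_apply, map_tmul, LinearMap.id_apply,
    LinearEquiv.coe_coe]
  rw [← LinearMap.comp_apply ρX', hg, LinearMap.comp_apply]
  induction ρX x using TensorProduct.induction_on with
  | zero => simp
  | add t₁ t₂ h₁ h₂ => simp only [add_tmul, map_add, h₁, h₂]
  | tmul a x₀ => simp

theorem isLeftCoactionHom_assoc_symm_coactOnLeft :
    IsLeftCoactionHom k A (coactOnLeft ρX) (coactOnLeft (coactOnLeft ρX))
      (TensorProduct.assoc k X Y Z).symm.toLinearMap := by
  refine TensorProduct.ext_threefold' fun x y z => ?_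
  simp only [coactOnLeft, LinearMap.comp_apply, map_tmul, LinearMap.id_apply,
    LinearEquiv.coe_coe, assoc_symm_tmul]
  induction ρX x using TensorProduct.induction_on with
  | zero => simp
  | add t₁ t₂ h₁ h₂ => simp only [add_tmul, map_add, h₁, h₂]
  | tmul a x₀ => simp

theorem IsLeftCoactionHom.map_diagCoact {g : X →ₗ[k] X'} {h : Y →ₗ[k] Y'}
    (hg : IsLeftCoactionHom k A ρX ρX' g) (hh : IsLeftCoactionHom k A ρY ρY' h) :
    IsLeftCoactionHom k A (diagCoact ρX ρY) (diagCoact ρX' ρY') (map g h) := by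
  refine TensorProduct.ext' fun x y => ?_
  simp only [diagCoact, LinearMap.comp_apply, map_tmul, LinearEquiv.coe_coe]
  rw [← LinearMap.comp_apply ρX', hg, ← LinearMap.comp_apply ρY', hh, LinearMap.comp_apply,
    LinearMap.comp_apply]
  induction ρX x using TensorProduct.induction_on with
  | zero => simp
  | add t₁ t₂ h₁ h₂ => simp only [add_tmul, map_add, h₁, h₂]
  | tmul a x₀ =>
    induction ρY y using TensorProduct.induction_on with
    | zero => simp
    | add t₁ t₂ h₁ h₂ => simp only [tmul_add, map_add, h₁, h₂]
    | tmul b y₀ => simp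

theorem isLeftCoactionHom_assoc :
    IsLeftCoactionHom k A (diagCoact (diagCoact ρX ρY) ρZ) (diagCoact ρX (diagCoact ρY ρZ))
      (TensorProduct.assoc k X Y Z).toLinearMap := by
  refine TensorProduct.ext_threefold fun x y z => ?_
  simp only [diagCoact, LinearMap.comp_apply, map_tmul, LinearEquiv.coe_coe, assoc_tmul]
  induction ρX x using TensorProduct.induction_on with
  | zero => simp
  | add t₁ t₂ h₁ h₂ => simp only [add_tmul, map_add, h₁, h₂]
  | tmul a x₀ =>
    induction ρY y using TensorProduct.induction_on with
    | zero => simp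
    | add t₁ t₂ h₁ h₂ => simp only [add_tmul, tmul_add, map_add, h₁, h₂]
    | tmul b y₀ =>
      induction ρZ z using TensorProduct.induction_on with
      | zero => simp
      | add t₁ t₂ h₁ h₂ => simp only [tmul_add, map_add, h₁, h₂]
      | tmul c z₀ => simp [mul_assoc]

theorem isLeftCoactionHom_tensorTensorTensorComm :
    IsLeftCoactionHom k A (diagCoact (coactOnLeft (Y := Y) ρX) (coactOnLeft (Y := W) ρZ))
      (coactOnLeft (diagCoact ρX ρZ)) (tensorTensorTensorComm k X Y Z W).toLinearMap := by
  refine TensorProduct.ext_fourfold' fun x y z w => ?_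
  simp only [diagCoact, coactOnLeft, LinearMap.comp_apply, map_tmul, LinearMap.id_apply,
    LinearEquiv.coe_coe, tensorTensorTensorComm_tmul]
  induction ρX x using TensorProduct.induction_on with
  | zero => simp
  | add t₁ t₂ h₁ h₂ => simp only [add_tmul, map_add, h₁, h₂]
  | tmul a x₀ =>
    induction ρZ z using TensorProduct.induction_on with
    | zero => simp
    | add t₁ t₂ h₁ h₂ => simp only [add_tmul, tmul_add, map_add, h₁, h₂]
    | tmul c z₀ => simp

theorem isLeftCoactionHom_mul' :
    IsLeftCoactionHom k A (diagCoact Coalgebra.comul Coalgebra.comul) Coalgebra.comul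
      (LinearMap.mul' k A) := by
  refine TensorProduct.ext' fun a b => ?_
  simp only [diagCoact, LinearMap.comp_apply, map_tmul, LinearMap.mul'_apply,
    Bialgebra.comul_mul (R := k)]
  induction Coalgebra.comul (R := k) a using TensorProduct.induction_on with
  | zero => simp
  | add t₁ t₂ h₁ h₂ => simp only [add_tmul, add_mul, map_add, h₁, h₂]
  | tmul a₁ a₂ =>
    induction Coalgebra.comul (R := k) b using TensorProduct.induction_on with
    | zero => simp
    | add t₁ t₂ h₁ h₂ => simp only [tmul_add, mul_add, map_add, h₁, h₂]
    | tmul b₁ b₂ => simp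

theorem isLeftCoactionHom_comul :
    IsLeftCoactionHom k A Coalgebra.comul (coactOnLeft Coalgebra.comul) Coalgebra.comul :=
  Coalgebra.coassoc

theorem isLeftCoactionHom_diagLeftAct {ω : A ⊗[k] X →ₗ[k] X}
    (h : IsLeftCoactionHom k A (diagCoact Coalgebra.comul ρX) ρX ω) :
    IsLeftCoactionHom k A (diagCoact Coalgebra.comul (coactOnLeft (Y := A) ρX))
      (coactOnLeft ρX) (diagLeftAct ω) :=
  (h.map_coactOnLeft (LinearMap.mul' k A)).comp <|
    isLeftCoactionHom_tensorTensorTensorComm.comp <|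
      isLeftCoactionHom_comul.map_diagCoact isLeftCoactionHom_id

theorem isLeftCoactionHom_diagRightCoact {ρrX : X →ₗ[k] X ⊗[k] A} {ρrY : Y →ₗ[k] Y ⊗[k] A}
    (hX : IsLeftCoactionHom k A ρX (coactOnLeft ρX) ρrX)
    (hY : IsLeftCoactionHom k A ρY (coactOnLeft ρY) ρrY) :
    IsLeftCoactionHom k A (diagCoact ρX ρY) (coactOnLeft (diagCoact ρX ρY))
      (diagRightCoact ρrX ρrY) :=
  (isLeftCoactionHom_id.map_coactOnLeft (LinearMap.mul' k A)).comp <|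
    isLeftCoactionHom_tensorTensorTensorComm.comp <| hX.map_diagCoact hY

end LeftCoaction

end Framework

section HopfBimodule

variable {k : Type} [Field k] {A : Type} [Ring A] [Bialgebra k A]
variable {M N : Type} [AddCommGroup M] [Module k M] [AddCommGroup N] [Module k N]

theorem IsBimodule.isRightActionHom {ωl : A ⊗[k] M →ₗ[k] M} {ωr : M ⊗[k] A →ₗ[k] M}
    (h : IsBimodule k A ωl ωr) : IsRightActionHom k A (actOnRight ωr) ωr ωl :=
  TensorProduct.ext_threefold fun a m b => (h a b m).symm

theorem IsHopfRR.isRightActionHom {ωr : M ⊗[k] A →ₗ[k] M} {ρ : M →ₗ[k] M ⊗[k] A}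
    (h : IsHopfRR k A ωr ρ) :
    IsRightActionHom k A ωr (diagAct ωr (LinearMap.mul' k A)) ρ := by
  rw [IsRightActionHom, h]
  exact TensorProduct.ext' fun m a => rfl

theorem IsHopfLL.isLeftCoactionHom {ω : A ⊗[k] M →ₗ[k] M} {ρl : M →ₗ[k] A ⊗[k] M}
    (h : IsHopfLL k A ω ρl) :
    IsLeftCoactionHom k A (diagCoact Coalgebra.comul ρl) ρl ω := by
  rw [IsLeftCoactionHom, h, diagCoact]
  conv_rhs => rw [← LinearMap.comp_assoc, ← map_comp]
  rw [LinearMap.id_comp, LinearMap.comp_id]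

theorem IsBicomodule.isLeftCoactionHom {ρl : M →ₗ[k] A ⊗[k] M} {ρr : M →ₗ[k] M ⊗[k] A}
    (h : IsBicomodule k A ρl ρr) : IsLeftCoactionHom k A ρl (coactOnLeft ρl) ρr :=
  h.symm

variable (k A) in
theorem isLeftCoactionHom_dL_dR :
    ∀ n, IsLeftCoactionHom k A (dL k A n) (coactOnLeft (dL k A n)) (dR k A n)
  | 0 => by
    ext
    rfl
  | n + 1 =>
    isLeftCoactionHom_diagRightCoact (isLeftCoactionHom_dL_dR n) isLeftCoactionHom_comul

theorem mulP_succ_of_ne {n i : ℕ} (h : i ≠ n + 1) :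
    mulP k A (n + 1) i = map (mulP k A n i) LinearMap.id := by
  rw [mulP]
  exact if_neg h

theorem mulP_succ_self (n : ℕ) :
    mulP k A (n + 1) (n + 1) =
      map LinearMap.id (LinearMap.mul' k A) ∘ₗ
        (TensorProduct.assoc k (Pk k A n) A A).toLinearMap := by
  rw [mulP]
  exact if_pos rfl

variable (k A) in
theorem isLeftCoactionHom_mulP :
    ∀ n i, IsLeftCoactionHom k A (dL k A (n + 1)) (dL k A n) (mulP k A n i)
  | 0, _ => isLeftCoactionHom_zero
  | n + 1, i => by
    by_cases hi : i = n + 1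
    · rw [hi, mulP_succ_self]
      exact (isLeftCoactionHom_id.map_diagCoact isLeftCoactionHom_mul').comp
        isLeftCoactionHom_assoc
    · rw [mulP_succ_of_ne hi]
      exact (isLeftCoactionHom_mulP n i).map_diagCoact isLeftCoactionHom_id

theorem dL_zero : dL k A 0 = TensorProduct.mk k A (Pk k A 0) 1 := by
  ext
  show map (Algebra.linearMap k A) LinearMap.id ((TensorProduct.lid k k).symm 1) = _
  simp only [lid_symm_apply, map_tmul, Algebra.linearMap_apply, map_one, LinearMap.id_apply]
  rfl

variable (k A) in
theorem isLeftCoactionHom_insP :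
    ∀ n, IsLeftCoactionHom k A (diagCoact Coalgebra.comul (dL k A n)) (dL k A (n + 1))
      (insP k A n)
  | 0 => by
    refine TensorProduct.ext' fun a t => ?_
    -- `insP k A 0` is `comm k A k`; restated on `Pk k A 0` so that `simp` sees matching types.
    show diagCoact (dL k A 0) Coalgebra.comul (t ⊗ₜ a) =
      map LinearMap.id (TensorProduct.comm k A (Pk k A 0)).toLinearMap
        (diagCoact Coalgebra.comul (dL k A 0) (a ⊗ₜ t))
    rw [dL_zero]
    simp only [diagCoact, LinearMap.comp_apply, LinearEquiv.coe_coe, map_tmul,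
      TensorProduct.mk_apply]
    induction Coalgebra.comul (R := k) a using TensorProduct.induction_on with
    | zero => simp
    | add t₁ t₂ h₁ h₂ => simp only [add_tmul, tmul_add, map_add, h₁, h₂]
    | tmul a₁ a₂ => simp
  | n + 1 =>
    ((isLeftCoactionHom_insP n).map_diagCoact isLeftCoactionHom_id).comp
      isLeftCoactionHom_assoc.symm

theorem isRightActionHom_ldiag {ωN : A ⊗[k] N →ₗ[k] N} {ωNr : N ⊗[k] A →ₗ[k] N}
    (h : IsRightActionHom k A (actOnRight ωNr) ωNr ωN) :
    ∀ p, IsRightActionHom k A (actOnRight (rdiagAct k A ωNr p)) (rdiagAct k A ωNr p)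
      (ldiag k A ωN p)
  | 0 => h
  | p + 1 => isRightActionHom_diagLeftAct (isRightActionHom_ldiag h p)

theorem isLeftCoactionHom_ldiag {ωN : A ⊗[k] N →ₗ[k] N} {ρNl : N →ₗ[k] A ⊗[k] N}
    (h : IsLeftCoactionHom k A (diagCoact Coalgebra.comul ρNl) ρNl ωN) :
    ∀ p, IsLeftCoactionHom k A (diagCoact Coalgebra.comul (lcoBase k A ρNl p))
      (lcoBase k A ρNl p) (ldiag k A ωN p)
  | 0 => h
  | p + 1 => isLeftCoactionHom_diagLeftAct (isLeftCoactionHom_ldiag h p)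

theorem shiftB_comp_rhoBase_succ (ρN : N →ₗ[k] N ⊗[k] A) (p : ℕ) :
    (shiftB k A (p + 1)).toLinearMap ∘ₗ rhoBase k A ρN (p + 1) =
      map ((shiftB k A p).toLinearMap ∘ₗ rhoBase k A ρN p) LinearMap.id :=
  (map_comp _ _ _ _).symm

theorem isRightActionHom_shiftB_comp_rhoBase {ωNr : N ⊗[k] A →ₗ[k] N}
    {ρN : N →ₗ[k] N ⊗[k] A} (h : IsRightActionHom k A ωNr (diagAct ωNr (LinearMap.mul' k A)) ρN) :
    ∀ p, IsRightActionHom k A (rdiagAct k A ωNr p) (rdiagAct k A ωNr (p + 1))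
      ((shiftB k A p).toLinearMap ∘ₗ rhoBase k A ρN p)
  | 0 => h
  | p + 1 => by
    rw [shiftB_comp_rhoBase_succ]
    exact (isRightActionHom_shiftB_comp_rhoBase h p).map_diagAct isRightActionHom_id

theorem isLeftCoactionHom_shiftB_comp_rhoBase {ρNl : N →ₗ[k] A ⊗[k] N}
    {ρN : N →ₗ[k] N ⊗[k] A} (h : IsLeftCoactionHom k A ρNl (coactOnLeft ρNl) ρN) :
    ∀ p, IsLeftCoactionHom k A (lcoBase k A ρNl p) (lcoBase k A ρNl (p + 1))
      ((shiftB k A p).toLinearMap ∘ₗ rhoBase k A ρN p)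
  | 0 => h
  | p + 1 => by
    rw [shiftB_comp_rhoBase_succ]
    exact (isLeftCoactionHom_shiftB_comp_rhoBase h p).map_coactOnLeft LinearMap.id

theorem comulAt_succ_of_ne {p j : ℕ} (h : j ≠ p + 1) :
    comulAt k A (N := N) (p + 1) j = map (comulAt k A p j) LinearMap.id := by
  rw [comulAt]
  exact if_neg h

theorem comulAt_succ_self (p : ℕ) :
    comulAt k A (N := N) (p + 1) (p + 1) =
      (TensorProduct.assoc k (Cd k A N p) A A).symm.toLinearMap ∘ₗ
        map LinearMap.id Coalgebra.comul := by
  rw [comulAt]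
  exact if_pos rfl

theorem isRightActionHom_comulAt (ωNr : N ⊗[k] A →ₗ[k] N) :
    ∀ p j, IsRightActionHom k A (rdiagAct k A ωNr p) (rdiagAct k A ωNr (p + 1))
      (comulAt k A p j)
  | 0, _ => isRightActionHom_zero
  | p + 1, j => by
    by_cases hj : j = p + 1
    · rw [hj, comulAt_succ_self]
      exact isRightActionHom_assoc_symm_diagAct.comp
        (isRightActionHom_id.map_diagAct isRightActionHom_comul)
    · rw [comulAt_succ_of_ne hj]
      exact (isRightActionHom_comulAt ωNr p j).map_diagAct isRightActionHom_id

theorem isLeftCoactionHom_comulAt (ρNl : N →ₗ[k] A ⊗[k] N) :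
    ∀ p j, IsLeftCoactionHom k A (lcoBase k A ρNl p) (lcoBase k A ρNl (p + 1))
      (comulAt k A p j)
  | 0, _ => isLeftCoactionHom_zero
  | p + 1, j => by
    by_cases hj : j = p + 1
    · rw [hj, comulAt_succ_self]
      exact isLeftCoactionHom_assoc_symm_coactOnLeft.comp
        (isLeftCoactionHom_id.map_coactOnLeft Coalgebra.comul)
    · rw [comulAt_succ_of_ne hj]
      exact (isLeftCoactionHom_comulAt ρNl p j).map_coactOnLeft LinearMap.id

theorem cofLast_eq (ρM : M →ₗ[k] M ⊗[k] A) {n p : ℕ} (f : Yc k A M N n p) :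
    cofLast k A ρM n p f = map f LinearMap.id ∘ₗ diagRightCoact (dR k A n) ρM := by
  rw [diagRightCoact, ← LinearMap.comp_assoc, ← map_comp, LinearMap.comp_id, LinearMap.id_comp]
  rfl

variable (k A) in
/-- The paper's `T^{n,p}(M,N)`. -/
def hopfBimoduleCochains (ωMr : M ⊗[k] A →ₗ[k] M) (ωNr : N ⊗[k] A →ₗ[k] N)
    (ρMl : M →ₗ[k] A ⊗[k] M) (ρNl : N →ₗ[k] A ⊗[k] N) (n p : ℕ) :
    Submodule k (Yc k A M N n p) :=
  rightActionHoms k A (rActDm k A ωMr n) (rdiagAct k A ωNr p) ⊓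
    leftCoactionHoms k A (lcoDm k A ρMl n) (lcoBase k A ρNl p)

theorem mem_hopfBimoduleCochains {ωMr : M ⊗[k] A →ₗ[k] M} {ωNr : N ⊗[k] A →ₗ[k] N}
    {ρMl : M →ₗ[k] A ⊗[k] M} {ρNl : N →ₗ[k] A ⊗[k] N} {n p : ℕ} {f : Yc k A M N n p} :
    f ∈ hopfBimoduleCochains k A ωMr ωNr ρMl ρNl n p ↔
      IsRightLinear k A ωMr ωNr n p f ∧ IsLeftColinear k A ρMl ρNl n p f :=
  Iff.rfl

section Cochains

variable {ωM : A ⊗[k] M →ₗ[k] M} {ωMr : M ⊗[k] A →ₗ[k] M} {ρMl : M →ₗ[k] A ⊗[k] M}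
  {ρM : M →ₗ[k] M ⊗[k] A} {ωN : A ⊗[k] N →ₗ[k] N} {ωNr : N ⊗[k] A →ₗ[k] N}
  {ρNl : N →ₗ[k] A ⊗[k] N} {ρN : N →ₗ[k] N ⊗[k] A} {n p : ℕ} {f : Yc k A M N n p}

theorem face0_mem (hNbim : IsBimodule k A ωN ωNr) (hNLL : IsHopfLL k A ωN ρNl)
    (hf : f ∈ hopfBimoduleCochains k A ωMr ωNr ρMl ρNl n p) :
    face0 k A ωN n p f ∈ hopfBimoduleCochains k A ωMr ωNr ρMl ρNl (n + 1) p :=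
  ⟨(isRightActionHom_ldiag hNbim.isRightActionHom p).comp <|
      (hf.1.map_actOnRight LinearMap.id).comp <|
        isRightActionHom_assoc.comp (isRightActionHom_id.map_actOnRight _),
    (isLeftCoactionHom_ldiag hNLL.isLeftCoactionHom p).comp <|
      (isLeftCoactionHom_id.map_diagCoact hf.2).comp <| isLeftCoactionHom_assoc.comp <|
        (isLeftCoactionHom_insP k A n).symm.map_diagCoact isLeftCoactionHom_id⟩

theorem faceMid_mem (hf : f ∈ hopfBimoduleCochains k A ωMr ωNr ρMl ρNl n p) (i : ℕ) :
    faceMid k A n p i f ∈ hopfBimoduleCochains k A ωMr ωNr ρMl ρNl (n + 1) p :=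
  ⟨hf.1.comp (isRightActionHom_id.map_actOnRight _),
    hf.2.comp ((isLeftCoactionHom_mulP k A n i).map_diagCoact isLeftCoactionHom_id)⟩

theorem faceLastH_mem (hMbim : IsBimodule k A ωM ωMr) (hMLL : IsHopfLL k A ωM ρMl)
    (hf : f ∈ hopfBimoduleCochains k A ωMr ωNr ρMl ρNl n p) :
    faceLastH k A ωM n p f ∈ hopfBimoduleCochains k A ωMr ωNr ρMl ρNl (n + 1) p :=
  ⟨hf.1.comp
      ((hMbim.isRightActionHom.map_actOnRight LinearMap.id).comp isRightActionHom_assoc),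
    hf.2.comp ((isLeftCoactionHom_id.map_diagCoact hMLL.isLeftCoactionHom).comp
      isLeftCoactionHom_assoc)⟩

theorem cof0H_mem (hNRR : IsHopfRR k A ωNr ρN) (hNBC : IsBicomodule k A ρNl ρN)
    (hf : f ∈ hopfBimoduleCochains k A ωMr ωNr ρMl ρNl n p) :
    cof0H k A ρN n p f ∈ hopfBimoduleCochains k A ωMr ωNr ρMl ρNl n (p + 1) :=
  ⟨(isRightActionHom_shiftB_comp_rhoBase hNRR.isRightActionHom p).comp hf.1,
    (isLeftCoactionHom_shiftB_comp_rhoBase hNBC.isLeftCoactionHom p).comp hf.2⟩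

theorem comulAt_comp_mem (hf : f ∈ hopfBimoduleCochains k A ωMr ωNr ρMl ρNl n p) (j : ℕ) :
    comulAt k A p j ∘ₗ f ∈ hopfBimoduleCochains k A ωMr ωNr ρMl ρNl n (p + 1) :=
  ⟨(isRightActionHom_comulAt ωNr p j).comp hf.1,
    (isLeftCoactionHom_comulAt ρNl p j).comp hf.2⟩

theorem cofLast_mem (hMRR : IsHopfRR k A ωMr ρM) (hMBC : IsBicomodule k A ρMl ρM)
    (hf : f ∈ hopfBimoduleCochains k A ωMr ωNr ρMl ρNl n p) :
    cofLast k A ρM n p f ∈ hopfBimoduleCochains k A ωMr ωNr ρMl ρNl n (p + 1) := by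
  rw [cofLast_eq]
  exact ⟨(hf.1.map_diagAct isRightActionHom_id).comp
      (isRightActionHom_diagRightCoact hMRR.isRightActionHom),
    (hf.2.map_coactOnLeft LinearMap.id).comp
      (isLeftCoactionHom_diagRightCoact (isLeftCoactionHom_dL_dR k A n)
        hMBC.isLeftCoactionHom)⟩

theorem bH_mem (hMbim : IsBimodule k A ωM ωMr) (hNbim : IsBimodule k A ωN ωNr)
    (hMLL : IsHopfLL k A ωM ρMl) (hNLL : IsHopfLL k A ωN ρNl)
    (hf : f ∈ hopfBimoduleCochains k A ωMr ωNr ρMl ρNl n p) (i : ℕ) :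
    bH k A ωM ωN n p i f ∈ hopfBimoduleCochains k A ωMr ωNr ρMl ρNl (n + 1) p := by
  unfold bH
  split_ifs
  · exact face0_mem hNbim hNLL hf
  · exact faceMid_mem hf i
  · exact faceLastH_mem hMbim hMLL hf

theorem cH_mem (hMRR : IsHopfRR k A ωMr ρM) (hNRR : IsHopfRR k A ωNr ρN)
    (hMBC : IsBicomodule k A ρMl ρM) (hNBC : IsBicomodule k A ρNl ρN)
    (hf : f ∈ hopfBimoduleCochains k A ωMr ωNr ρMl ρNl n p) (j : ℕ) :
    cH k A ρM ρN n p j f ∈ hopfBimoduleCochains k A ωMr ωNr ρMl ρNl n (p + 1) := by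
  unfold cH
  split_ifs
  · exact cof0H_mem hNRR hNBC hf
  · exact comulAt_comp_mem hf j
  · exact cofLast_mem hMRR hMBC hf

theorem dmH_mem (hMbim : IsBimodule k A ωM ωMr) (hNbim : IsBimodule k A ωN ωNr)
    (hMLL : IsHopfLL k A ωM ρMl) (hNLL : IsHopfLL k A ωN ρNl)
    (hf : f ∈ hopfBimoduleCochains k A ωMr ωNr ρMl ρNl n p) :
    dmH k A ωM ωN n p f ∈ hopfBimoduleCochains k A ωMr ωNr ρMl ρNl (n + 1) p :=
  Submodule.sum_mem _ fun i _ => zsmul_mem (bH_mem hMbim hNbim hMLL hNLL hf i) _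

theorem dcH_mem (hMRR : IsHopfRR k A ωMr ρM) (hNRR : IsHopfRR k A ωNr ρN)
    (hMBC : IsBicomodule k A ρMl ρM) (hNBC : IsBicomodule k A ρNl ρN)
    (hf : f ∈ hopfBimoduleCochains k A ωMr ωNr ρMl ρNl n p) :
    dcH k A ρM ρN n p f ∈ hopfBimoduleCochains k A ωMr ωNr ρMl ρNl n (p + 1) :=
  Submodule.sum_mem _ fun j _ => zsmul_mem (cH_mem hMRR hNRR hMBC hNBC hf j) _

end Cochains

end HopfBimodule

/-- For Hopf bimodules `M, N` over `A`, the subspaces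
`T^{n,p}(M,N) = Hom_{mod-A}^{A-comod}(A^{⊗n} ⊗ M, N ⊗ A^{⊗p})` of maps that are
simultaneously right `A`-linear and left `A`-colinear are stable under the
Hopf-module differentials `d_m, d_c`, so `(T^{n,p}(M,N), d_m, d_c)` is a double
complex, defining a cohomology theory for Hopf bimodules. -/
theorem hopf_bimodule_subcomplex (k : Type) [Field k] (A : Type) [Ring A]
    [Bialgebra k A]
    (M N : Type) [AddCommGroup M] [Module k M] [AddCommGroup N] [Module k N]
    (ωM : A ⊗[k] M →ₗ[k] M) (ωMr : M ⊗[k] A →ₗ[k] M)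
    (ρMl : M →ₗ[k] A ⊗[k] M) (ρM : M →ₗ[k] M ⊗[k] A)
    (ωN : A ⊗[k] N →ₗ[k] N) (ωNr : N ⊗[k] A →ₗ[k] N)
    (ρNl : N →ₗ[k] A ⊗[k] N) (ρN : N →ₗ[k] N ⊗[k] A)
    (hM : IsHopfBimodule k A ωM ωMr ρMl ρM) (hN : IsHopfBimodule k A ωN ωNr ρNl ρN)
    (n p : ℕ) (f : Yc k A M N n p)
    (hf : IsRightLinear k A ωMr ωNr n p f ∧ IsLeftColinear k A ρMl ρNl n p f) :
    (IsRightLinear k A ωMr ωNr (n+1) p (dmH k A ωM ωN n p f) ∧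
      IsLeftColinear k A ρMl ρNl (n+1) p (dmH k A ωM ωN n p f)) ∧
    (IsRightLinear k A ωMr ωNr n (p+1) (dcH k A ρM ρN n p f) ∧
      IsLeftColinear k A ρMl ρNl n (p+1) (dcH k A ρM ρN n p f)) := by
  obtain ⟨-, -, hMbim, -, -, hMBC, hMLL, -, -, hMRR⟩ := hM
  obtain ⟨-, -, hNbim, -, -, hNBC, hNLL, -, -, hNRR⟩ := hN
  have hf' := mem_hopfBimoduleCochains.mpr hf
  exact ⟨mem_hopfBimoduleCochains.mp (dmH_mem hMbim hNbim hMLL hNLL hf'),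
    mem_hopfBimoduleCochains.mp (dcH_mem hMRR hNRR hMBC hNBC hf')⟩

end PS
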